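/- arXiv:0906.3128 — 2 statements merged into one kernel-verified Lean document; each statement's English description precedes it below -/
import Mathlib

section
/- Infinite-volume abelian property: let γ ≥ 0 and ζ₁, ζ₂ ∈ [0,∞)^{Z^d} with ζ₁ + ζ₂ γ-stabilizable. Then ζ₁ is γ-stabilizable, S^{(γ)}(ζ₁) + ζ₂ is γ-stabilizable, and S^{(γ)}(ζ₁ + ζ₂) = S^{(γ)}(S^{(γ)}(ζ₁) + ζ₂). -/
/-- Sites of the lattice `ℤ^d`. -/
abbrev Site (d : ℕ) := Fin d → ℤ

/-- ℓ¹ (taxicab) distance on `ℤ^d`. -/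
def dist1 {d : ℕ} (x y : Site d) : ℕ := ∑ i, (x i - y i).natAbs

/-- The unit step in direction `i`, with sign given by `b`. -/
def step {d : ℕ} (i : Fin d) (b : Bool) : Site d :=
  fun j => if j = i then (if b then 1 else -1) else 0

/-- `p d n x y` is the `n`-step transition probability of the simple random
walk on `ℤ^d` stepping to each of the `2d` nearest neighbors with
probability `1/(2d)`. -/
noncomputable def srwP (d : ℕ) : ℕ → Site d → Site d → ℝ
  | 0, x, y => if x = y then 1 else 0
  | n + 1, x, y => (1 / (2 * d)) * ∑ s : Fin d × Bool, srwP d n (x + step s.1 s.2) y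


/-- Height configurations on `ℤ^d` (heights are reals). -/
abbrev Config (d : ℕ) := Site d → ℝ

/-- The toppling matrix `Δ^{(γ)}`: `2d+γ` on the diagonal, `-1` on
nearest-neighbor pairs, `0` otherwise. -/
noncomputable def toppleMat (d : ℕ) (γ : ℝ) (x y : Site d) : ℝ :=
  if x = y then 2 * d + γ else if dist1 x y = 1 then -1 else 0

/-- Toppling site `x`: subtract the row `Δ^{(γ)}_{x,·}` from the configuration. -/
noncomputable def topple (d : ℕ) (γ : ℝ) (x : Site d) (η : Config d) : Config d :=
  fun y => η y - toppleMat d γ x y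

/-- Apply a finite sequence of topplings. -/
noncomputable def applyList (d : ℕ) (γ : ℝ) : List (Site d) → Config d → Config d
  | [], η => η
  | x :: l, η => applyList d γ l (topple d γ x η)

/-- A sequence of topplings, all at sites of `Λ`, is legal if each toppled site
is unstable (height `≥ 2d+γ`) at the moment it is toppled. -/
def legalList (d : ℕ) (γ : ℝ) (Λ : Finset (Site d)) : Config d → List (Site d) → Prop
  | _, [] => True
  | η, x :: l => x ∈ Λ ∧ 2 * d + γ ≤ η x ∧ legalList d γ Λ (topple d γ x η) l

/-- A `(Λ,γ)`-stabilizing sequence: a legal sequence of topplings in `Λ` whose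
final configuration is stable (`< 2d+γ`) at every site of `Λ`. -/
def stabilizingList (d : ℕ) (γ : ℝ) (Λ : Finset (Site d)) (η : Config d)
    (l : List (Site d)) : Prop :=
  legalList d γ Λ η l ∧ ∀ x ∈ Λ, applyList d γ l η x < 2 * d + γ

/-- Apply an optional toppling (`none` = no toppling at this time). -/
noncomputable def toppleO (d : ℕ) (γ : ℝ) (o : Option (Site d)) (η : Config d) :
    Config d :=
  match o with
  | none => η
  | some x => topple d γ x η

/-- The sequence of configurations obtained from `η` by performing the
(possibly infinite) sequence of topplings `s`. -/
noncomputable def cfgSeq (d : ℕ) (γ : ℝ) (η : Config d) (s : ℕ → Option (Site d)) :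
    ℕ → Config d
  | 0 => η
  | n + 1 => toppleO d γ (s n) (cfgSeq d γ η s n)

/-- A sequence of topplings is legal if every toppled site is unstable
(height `≥ 2d+γ`) at the moment it is toppled. -/
def legalSeq (d : ℕ) (γ : ℝ) (η : Config d) (s : ℕ → Option (Site d)) : Prop :=
  ∀ n x, s n = some x → 2 * d + γ ≤ cfgSeq d γ η s n x

/-- A sequence of topplings is exhaustive if every site that is unstable at some
time is toppled at some later time. -/
def exhaustiveSeq (d : ℕ) (γ : ℝ) (η : Config d) (s : ℕ → Option (Site d)) : Prop :=
  ∀ n x, 2 * d + γ ≤ cfgSeq d γ η s n x → ∃ m, n ≤ m ∧ s m = some x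

/-- `η` is `γ`-stabilizable: in some (equivalently, any) exhaustive legal
sequence of topplings, every site topples finitely often. -/
def Stabilizable (d : ℕ) (γ : ℝ) (η : Config d) : Prop :=
  ∃ s : ℕ → Option (Site d), legalSeq d γ η s ∧ exhaustiveSeq d γ η s ∧
    ∀ x : Site d, {m : ℕ | s m = some x}.Finite

/-- The toppling numbers `N^{(γ)}(η)_x` of an exhaustive legal sequence
(independent of the choice of sequence). -/
noncomputable def Ncount (d : ℕ) (γ : ℝ) (η : Config d) (x : Site d) : ℕ :=
  open scoped Classical in
  if h : Stabilizable d γ η then Nat.card {m : ℕ | h.choose m = some x} else 0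

/-- The infinite-volume stabilization `S^{(γ)}(η) = η − Δ^{(γ)} N^{(γ)}(η)`. -/
noncomputable def stabilizeInf (d : ℕ) (γ : ℝ) (η : Config d) : Config d :=
  fun x => η x - (2 * d + γ) * (Ncount d γ η x : ℝ) +
    ∑ s : Fin d × Bool, (Ncount d γ η (x + step s.1 s.2) : ℝ)

section Aux
open Finset
variable {d : ℕ} {γ : ℝ}

lemma add_step_ne (x : Site d) (i : Fin d) (b : Bool) : x + step i b ≠ x := by
  intro h
  have h2 := congrFun h i
  simp only [Pi.add_apply, step, if_pos rfl] at h2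
  cases b <;> simp at h2 <;> omega

lemma dist1_comm (x y : Site d) : dist1 x y = dist1 y x := by
  unfold dist1
  exact Finset.sum_congr rfl fun i _ => by rw [← Int.natAbs_neg, neg_sub]

lemma step_self (i : Fin d) (b : Bool) : step i b i = if b then 1 else -1 := by
  simp [step]

lemma step_ne {j i : Fin d} (hj : j ≠ i) (b : Bool) : step i b j = 0 := by
  simp [step, hj]

lemma dist1_add_step (x : Site d) (i : Fin d) (b : Bool) :
    dist1 x (x + step i b) = 1 := by
  unfold dist1
  have h : ∀ j, (x j - (x + step i b) j).natAbs = if j = i then 1 else 0 := by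
    intro j
    show (x j - (x j + step i b j)).natAbs = _
    by_cases hj : j = i
    · subst hj; rw [step_self, if_pos rfl]; cases b <;> simp <;> omega
    · rw [step_ne hj, if_neg hj]; omega
  rw [Finset.sum_congr rfl fun j _ => h j]
  simp

lemma exists_unique_step {x y : Site d} (h : dist1 x y = 1) :
    ∃! p : Fin d × Bool, x + step p.1 p.2 = y := by
  unfold dist1 at h
  have hex : ∃ i : Fin d, (x i - y i).natAbs ≠ 0 := by
    by_contra hc
    push_neg at hc
    rw [Finset.sum_congr rfl fun i _ => hc i] at h
    simp at h
  obtain ⟨i, hi⟩ := hex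
  have hsplit := Finset.add_sum_erase Finset.univ (fun j => (x j - y j).natAbs) (Finset.mem_univ i)
  rw [← hsplit] at h
  replace h : (x i - y i).natAbs + ∑ k ∈ Finset.univ.erase i, (x k - y k).natAbs = 1 := h
  have hti : (x i - y i).natAbs = 1 := by omega
  have hrest : ∀ j, j ≠ i → (x j - y j).natAbs = 0 := by
    intro j hj
    have h0 : ∑ k ∈ Finset.univ.erase i, (x k - y k).natAbs = 0 := by omega
    exact (Finset.sum_eq_zero_iff).1 h0 j (by simp [hj])
  have hothers : ∀ j, j ≠ i → x j = y j := by
    intro j hj; have := hrest j hj; omega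
  have hdiff : x i - y i = 1 ∨ x i - y i = -1 := by omega
  have key : ∀ b : Bool, (x i - y i = if b then -1 else 1) →
      ∃! p : Fin d × Bool, x + step p.1 p.2 = y := by
    intro b hb
    refine ⟨(i, b), ?_, ?_⟩
    · funext j
      show x j + step i b j = y j
      by_cases hj : j = i
      · subst hj; rw [step_self]; cases b <;> simp at hb ⊢ <;> omega
      · rw [step_ne hj]; have := hothers j hj; omega
    · rintro ⟨i', b'⟩ hp
      have hpi : x i' + step i' b' i' = y i' := congrFun hp i'
      rw [step_self] at hpi
      have hii : i' = i := by
        by_contra hne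
        have := hothers i' hne
        cases b' <;> simp at hpi <;> omega
      subst hii
      have : b' = b := by
        cases b' <;> cases b <;> simp at hpi hb ⊢ <;> omega
      rw [this]
  rcases hdiff with hc | hc
  · exact key false (by simpa using hc)
  · exact key true (by simpa using hc)

lemma indicator_sum (x y : Site d) :
    ∑ p : Fin d × Bool, (if x + step p.1 p.2 = y then (1:ℝ) else 0)
      = if dist1 x y = 1 then 1 else 0 := by
  by_cases h : dist1 x y = 1
  · obtain ⟨p₀, hp₀, hu⟩ := exists_unique_step h
    rw [if_pos h, Finset.sum_eq_single p₀]
    · rw [if_pos hp₀]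
    · intro b _ hb
      rw [if_neg]
      intro hbe
      exact hb (hu b hbe)
    · intro hmem; exact absurd (Finset.mem_univ p₀) hmem
  · rw [if_neg h]
    apply Finset.sum_eq_zero
    intro p _
    rw [if_neg]
    intro he
    exact h (he ▸ dist1_add_step x p.1 p.2)

lemma toppleMat_eq (y x : Site d) :
    toppleMat d γ y x = (2*d+γ) * (if y = x then (1:ℝ) else 0)
      - ∑ p : Fin d × Bool, (if x + step p.1 p.2 = y then (1:ℝ) else 0) := by
  rw [indicator_sum]
  unfold toppleMat
  by_cases h1 : y = x
  · subst h1
    have hd0 : dist1 y y = 0 := by simp [dist1]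
    simp [hd0]
  · rw [if_neg h1, if_neg h1, dist1_comm y x]
    split_ifs with h2 <;> simp

end Aux
open scoped Classical in
/-- Number of topplings at `y` among the first `n` steps of `s`. -/
noncomputable def mcount {d : ℕ} (s : ℕ → Option (Site d)) (y : Site d) (n : ℕ) : ℕ :=
  ((Finset.range n).filter (fun k => s k = some y)).card

section Aux2
variable {d : ℕ} {γ : ℝ}

open scoped Classical

lemma mcount_succ (s : ℕ → Option (Site d)) (y : Site d) (n : ℕ) :
    mcount s y (n+1) = mcount s y n + if s n = some y then 1 else 0 := by
  unfold mcount
  rw [Finset.range_add_one, Finset.filter_insert]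
  split_ifs with hc
  · rw [Finset.card_insert_of_notMem (by simp)]
  · rfl

lemma mcount_cast (s : ℕ → Option (Site d)) (y : Site d) (n : ℕ) :
    (mcount s y n : ℝ) = ∑ k ∈ Finset.range n, (if s k = some y then (1:ℝ) else 0) := by
  unfold mcount
  rw [Finset.card_filter]
  push_cast
  exact Finset.sum_congr rfl fun k _ => by split_ifs <;> simp

lemma cfgSeq_sub (η : Config d) (s : ℕ → Option (Site d)) (n : ℕ) (x : Site d) :
    cfgSeq d γ η s n x
      = η x - ∑ k ∈ Finset.range n, (s k).elim 0 (fun y => toppleMat d γ y x) := by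
  induction n with
  | zero => simp [cfgSeq]
  | succ n ih =>
    rw [Finset.sum_range_succ]
    show toppleO d γ (s n) (cfgSeq d γ η s n) x = _
    cases hs : s n with
    | none => simp [toppleO, ih, hs]
    | some y => simp [toppleO, topple, ih, hs]; ring

lemma cfg_formula (η : Config d) (s : ℕ → Option (Site d)) (n : ℕ) (x : Site d) :
    cfgSeq d γ η s n x = η x - (2*d+γ) * (mcount s x n : ℝ)
      + ∑ p : Fin d × Bool, (mcount s (x + step p.1 p.2) n : ℝ) := by
  rw [cfgSeq_sub]
  have hpt : ∀ k, (s k).elim 0 (fun y => toppleMat d γ y x)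
      = (2*d+γ) * (if s k = some x then (1:ℝ) else 0)
        - ∑ p : Fin d × Bool, (if s k = some (x + step p.1 p.2) then (1:ℝ) else 0) := by
    intro k
    cases hs : s k with
    | none => simp
    | some y =>
      show toppleMat d γ y x = _
      rw [toppleMat_eq]
      congr 1
      · congr 1; simp
      · exact Finset.sum_congr rfl fun p _ => by
          simp only [Option.some.injEq]
          split_ifs with h1 h2 h2 <;> first | rfl | (exact absurd h1.symm h2) | (exact absurd h2.symm h1)
  rw [Finset.sum_congr rfl fun k _ => hpt k, Finset.sum_sub_distrib, ← Finset.mul_sum,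
    Finset.sum_comm]
  rw [← mcount_cast]
  rw [Finset.sum_congr rfl (fun p _ => (mcount_cast s (x + step p.1 p.2) n).symm)]
  ring

end Aux2
section Aux3
variable {d : ℕ} {γ : ℝ}
open scoped Classical

/-- Least-action bound: if `M` is a stabilizing bound for `η`, then any legal
sequence topples each site at most `M x` times. -/
lemma legal_bound (η : Config d) (M : Site d → ℕ)
    (hM : ∀ x, η x - (2*d+γ) * (M x : ℝ)
      + ∑ p : Fin d × Bool, (M (x + step p.1 p.2) : ℝ) < 2*d+γ)
    (τ : ℕ → Option (Site d)) (hτ : legalSeq d γ η τ) :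
    ∀ n x, mcount τ x n ≤ M x := by
  intro n
  induction n with
  | zero => intro x; simp [mcount]
  | succ n ih =>
    intro x
    rw [mcount_succ]
    split_ifs with hs
    · -- need mcount τ x n < M x
      rcases lt_or_eq_of_le (ih x) with hlt | heq
      · omega
      · exfalso
        have hleg := hτ n x hs
        rw [cfg_formula] at hleg
        have hsum : ∑ p : Fin d × Bool, (mcount τ (x + step p.1 p.2) n : ℝ)
            ≤ ∑ p : Fin d × Bool, (M (x + step p.1 p.2) : ℝ) :=
          Finset.sum_le_sum fun p _ => Nat.cast_le.mpr (ih _)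
        rw [heq] at hleg
        have := hM x
        linarith
    · simpa using ih x

lemma mcount_le_card (s : ℕ → Option (Site d)) (y : Site d)
    (hf : {m | s m = some y}.Finite) (n : ℕ) :
    mcount s y n ≤ Nat.card {m | s m = some y} := by
  rw [Nat.card_eq_card_finite_toFinset hf]
  apply Finset.card_le_card
  intro k hk
  rw [Set.Finite.mem_toFinset]
  exact (Finset.mem_filter.1 hk).2

lemma exists_mcount_eq (s : ℕ → Option (Site d)) (y : Site d)
    (hf : {m | s m = some y}.Finite) :
    ∃ n₀, ∀ n, n₀ ≤ n → mcount s y n = Nat.card {m | s m = some y} := by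
  refine ⟨hf.toFinset.sup id + 1, fun n hn => ?_⟩
  rw [Nat.card_eq_card_finite_toFinset hf]
  unfold mcount
  congr 1
  ext k
  rw [Finset.mem_filter, Set.Finite.mem_toFinset, Finset.mem_range]
  constructor
  · exact fun h => h.2
  · intro h
    refine ⟨?_, h⟩
    have : k ≤ hf.toFinset.sup id := Finset.le_sup (f := id) (Set.Finite.mem_toFinset hf |>.2 h)
    omega

lemma finite_of_bounded (s : ℕ → Option (Site d)) (y : Site d) (B : ℕ)
    (hb : ∀ n, mcount s y n ≤ B) : {m | s m = some y}.Finite := by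
  by_contra hinf
  obtain ⟨t, hts, htc⟩ := Set.Infinite.exists_subset_card_eq hinf (B+1)
  have hsub : t ⊆ (Finset.range (t.sup id + 1)).filter (fun k => s k = some y) := by
    intro k hk
    rw [Finset.mem_filter, Finset.mem_range]
    refine ⟨?_, hts hk⟩
    have : k ≤ t.sup id := Finset.le_sup (f := id) hk
    omega
  have := Finset.card_le_card hsub
  have hB := hb (t.sup id + 1)
  unfold mcount at hB
  omega

/-- The final configuration of an exhaustive legal sequence with finite
toppling numbers is stable. -/
lemma stable_final (η : Config d) (σ : ℕ → Option (Site d))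
    (hexh : exhaustiveSeq d γ η σ)
    (hfin : ∀ x, {m | σ m = some x}.Finite) (x : Site d) :
    η x - (2*d+γ) * (Nat.card {m | σ m = some x} : ℝ)
      + ∑ p : Fin d × Bool, (Nat.card {m | σ m = some (x + step p.1 p.2)} : ℝ)
      < 2*d+γ := by
  by_contra hge
  push_neg at hge
  obtain ⟨n₀, hn₀⟩ := exists_mcount_eq σ x (hfin x)
  have h1 : ∀ p : Fin d × Bool, ∃ np, ∀ n, np ≤ n →
      mcount σ (x + step p.1 p.2) n = Nat.card {m | σ m = some (x + step p.1 p.2)} :=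
    fun p => exists_mcount_eq σ _ (hfin _)
  choose f hf using h1
  set n₁ := max n₀ (Finset.univ.sup f) with hn₁
  have hle1 : n₀ ≤ n₁ := le_max_left _ _
  have hcfg : 2*d+γ ≤ cfgSeq d γ η σ n₁ x := by
    rw [cfg_formula, hn₀ n₁ hle1,
      Finset.sum_congr rfl (fun p _ => by
        rw [hf p n₁ (le_trans (Finset.le_sup (Finset.mem_univ p)) (le_max_right _ _))])]
    exact hge
  obtain ⟨m, hm, hsm⟩ := hexh n₁ x hcfg
  have e1 := hn₀ m (le_trans hle1 hm)
  have e2 := hn₀ (m+1) (by omega)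
  rw [mcount_succ, if_pos hsm] at e2
  omega

lemma cfgSeq_add (η ζ : Config d) (s : ℕ → Option (Site d)) (n : ℕ) (x : Site d) :
    cfgSeq d γ (η + ζ) s n x = cfgSeq d γ η s n x + ζ x := by
  induction n with
  | zero => simp [cfgSeq]
  | succ n ih =>
    show toppleO d γ (s n) _ x = toppleO d γ (s n) _ x + ζ x
    cases s n with
    | none => simpa [toppleO] using ih
    | some y => simp [toppleO, topple, ih]; ring

lemma legal_add (η ζ : Config d) (hζ : ∀ x, 0 ≤ ζ x) (τ : ℕ → Option (Site d))
    (hτ : legalSeq d γ η τ) : legalSeq d γ (η + ζ) τ := by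
  intro n x hs
  rw [cfgSeq_add]
  have := hτ n x hs
  have := hζ x
  linarith

lemma toppleMat_nonpos {y x : Site d} (hyx : y ≠ x) : toppleMat d γ y x ≤ 0 := by
  unfold toppleMat
  rw [if_neg hyx]
  split_ifs <;> norm_num

end Aux3
open scoped Classical in
/-- Greedy stabilization: attempt to topple `q n` at time `n`. -/
noncomputable def gcfg (d : ℕ) (γ : ℝ) (q : ℕ → Site d) (η : Config d) : ℕ → Config d
  | 0 => η
  | n+1 => if 2*d+γ ≤ gcfg d γ q η n (q n) then topple d γ (q n) (gcfg d γ q η n)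
           else gcfg d γ q η n

open scoped Classical in
noncomputable def gseq (d : ℕ) (γ : ℝ) (q : ℕ → Site d) (η : Config d) (n : ℕ) :
    Option (Site d) :=
  if 2*d+γ ≤ gcfg d γ q η n (q n) then some (q n) else none

section Aux4
variable {d : ℕ} {γ : ℝ}
open scoped Classical

lemma gcfg_succ (q : ℕ → Site d) (η : Config d) (n : ℕ) :
    gcfg d γ q η (n+1) = if 2*d+γ ≤ gcfg d γ q η n (q n)
      then topple d γ (q n) (gcfg d γ q η n) else gcfg d γ q η n := rfl

lemma gcfg_eq (q : ℕ → Site d) (η : Config d) (n : ℕ) :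
    cfgSeq d γ η (gseq d γ q η) n = gcfg d γ q η n := by
  induction n with
  | zero => rfl
  | succ n ih =>
    show toppleO d γ (gseq d γ q η n) (cfgSeq d γ η (gseq d γ q η) n) = _
    rw [ih, gcfg_succ]
    by_cases hc : 2*d+γ ≤ gcfg d γ q η n (q n)
    · rw [if_pos hc, gseq, if_pos hc]; rfl
    · rw [if_neg hc, gseq, if_neg hc]; rfl

lemma exists_legal_exhaustive (η : Config d) :
    ∃ s, legalSeq d γ η s ∧ exhaustiveSeq d γ η s := by
  obtain ⟨e, he⟩ := exists_surjective_nat (Site d)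
  set q : ℕ → Site d := fun n => e (Nat.unpair n).1 with hq
  refine ⟨gseq d γ q η, ?_, ?_⟩
  · intro n x hs
    unfold gseq at hs
    split_ifs at hs with hc
    · rw [gcfg_eq]
      obtain rfl : q n = x := by injection hs
      exact hc
  · intro n x hx
    by_contra hno
    push_neg at hno
    have key : ∀ j, 2*d+γ ≤ cfgSeq d γ η (gseq d γ q η) (n+j) x := by
      intro j
      induction j with
      | zero => exact hx
      | succ j ih =>
        show 2*d+γ ≤ toppleO d γ (gseq d γ q η (n+j)) (cfgSeq d γ η (gseq d γ q η) (n+j)) x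
        cases hs : gseq d γ q η (n+j) with
        | none => exact ih
        | some y =>
          have hyx : y ≠ x := by
            intro hxy
            exact (hno (n+j) (by omega) (hxy ▸ hs)).elim
          have := toppleMat_nonpos (γ := γ) hyx
          show 2*d+γ ≤ cfgSeq d γ η (gseq d γ q η) (n+j) x - toppleMat d γ y x
          linarith
    obtain ⟨k, hk⟩ := he x
    set m := Nat.pair k n with hm
    have hqm : q m = x := by rw [hq]; simp [hm, Nat.unpair_pair]; exact hk
    have hmn : n ≤ m := Nat.right_le_pair k n
    have h2 : 2*d+γ ≤ cfgSeq d γ η (gseq d γ q η) m x := by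
      have h' := key (m - n)
      rwa [show n + (m - n) = m by omega] at h'
    apply hno m hmn
    unfold gseq
    rw [if_pos (by rw [hqm, ← gcfg_eq]; exact h2), hqm]

end Aux4
section Aux5
variable {d : ℕ} {γ : ℝ}

lemma counts_card_le (η : Config d) (M : Site d → ℕ)
    (hM : ∀ x, η x - (2*d+γ) * (M x : ℝ)
      + ∑ p : Fin d × Bool, (M (x + step p.1 p.2) : ℝ) < 2*d+γ)
    (τ : ℕ → Option (Site d)) (hτleg : legalSeq d γ η τ)
    (hτfin : ∀ x, {m | τ m = some x}.Finite) (x : Site d) :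
    Nat.card {m | τ m = some x} ≤ M x := by
  obtain ⟨n₀, hn₀⟩ := exists_mcount_eq τ x (hτfin x)
  rw [← hn₀ n₀ le_rfl]
  exact legal_bound η M hM τ hτleg n₀ x

lemma stabilizeInf_eq {η : Config d} (hst : Stabilizable d γ η) (x : Site d) :
    stabilizeInf d γ η x
      = η x - (2*d+γ) * ((Nat.card {m | hst.choose m = some x} : ℕ) : ℝ)
        + ∑ p : Fin d × Bool,
            ((Nat.card {m | hst.choose m = some (x + step p.1 p.2)} : ℕ) : ℝ) := by
  unfold stabilizeInf Ncount
  simp only [dif_pos hst]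

end Aux5
/-- Infinite-volume abelian property: if `ζ₁ + ζ₂` is `γ`-stabilizable, then so
are `ζ₁` and `S^{(γ)}(ζ₁) + ζ₂`, and
`S^{(γ)}(ζ₁ + ζ₂) = S^{(γ)}(S^{(γ)}(ζ₁) + ζ₂)`. -/
theorem abelian_infinite_volume (d : ℕ) (hd : 0 < d) (γ : ℝ) (hγ : 0 ≤ γ)
    (ζ₁ ζ₂ : Config d) (h₁ : ∀ z, 0 ≤ ζ₁ z) (h₂ : ∀ z, 0 ≤ ζ₂ z)
    (h : Stabilizable d γ (ζ₁ + ζ₂)) :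
    Stabilizable d γ ζ₁ ∧
    Stabilizable d γ (stabilizeInf d γ ζ₁ + ζ₂) ∧
    stabilizeInf d γ (ζ₁ + ζ₂) = stabilizeInf d γ (stabilizeInf d γ ζ₁ + ζ₂) := by
  classical
  obtain ⟨ρleg, ρexh, ρfin⟩ := h.choose_spec
  -- the stable bound coming from the stabilizing sequence of ζ₁+ζ₂
  have SN : ∀ x, (ζ₁ + ζ₂) x
      - (2*d+γ) * ((Nat.card {m | h.choose m = some x} : ℕ) : ℝ)
      + ∑ p : Fin d × Bool,
          ((Nat.card {m | h.choose m = some (x + step p.1 p.2)} : ℕ) : ℝ) < 2*d+γ :=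
    fun x => stable_final (ζ₁ + ζ₂) h.choose ρexh ρfin x
  -- Part 1 : ζ₁ is stabilizable
  obtain ⟨τ₀, hτ₀leg, hτ₀exh⟩ := exists_legal_exhaustive (γ := γ) ζ₁
  have hτ₀leg' : legalSeq d γ (ζ₁ + ζ₂) τ₀ := legal_add ζ₁ ζ₂ h₂ τ₀ hτ₀leg
  have hbound₀ := legal_bound (ζ₁ + ζ₂) _ SN τ₀ hτ₀leg'
  have hτ₀fin : ∀ x, {m | τ₀ m = some x}.Finite :=
    fun x => finite_of_bounded τ₀ x _ (fun n => hbound₀ n x)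
  have hstab₁ : Stabilizable d γ ζ₁ := ⟨τ₀, hτ₀leg, hτ₀exh, hτ₀fin⟩
  obtain ⟨σleg, σexh, σfin⟩ := hstab₁.choose_spec
  -- N₁ ≤ N
  have hσleg' : legalSeq d γ (ζ₁ + ζ₂) hstab₁.choose := legal_add ζ₁ ζ₂ h₂ _ σleg
  have hN₁N : ∀ y, Nat.card {m | hstab₁.choose m = some y}
      ≤ Nat.card {m | h.choose m = some y} :=
    fun y => counts_card_le (ζ₁ + ζ₂) _ SN hstab₁.choose hσleg' σfin y
  have hSdef : ∀ x, stabilizeInf d γ ζ₁ x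
      = ζ₁ x - (2*d+γ) * ((Nat.card {m | hstab₁.choose m = some x} : ℕ) : ℝ)
        + ∑ p : Fin d × Bool,
            ((Nat.card {m | hstab₁.choose m = some (x + step p.1 p.2)} : ℕ) : ℝ) :=
    fun x => stabilizeInf_eq hstab₁ x
  -- the stable bound M' = N - N₁ for η' := S(ζ₁) + ζ₂
  have hM' : ∀ x, (stabilizeInf d γ ζ₁ + ζ₂) x
      - (2*d+γ) * (((Nat.card {m | h.choose m = some x}
          - Nat.card {m | hstab₁.choose m = some x} : ℕ)) : ℝ)
      + ∑ p : Fin d × Bool,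
          (((Nat.card {m | h.choose m = some (x + step p.1 p.2)}
            - Nat.card {m | hstab₁.choose m = some (x + step p.1 p.2)} : ℕ)) : ℝ)
      < 2*d+γ := by
    intro x
    have hx := SN x
    rw [Pi.add_apply] at hx ⊢
    rw [hSdef x]
    rw [Finset.sum_congr rfl (fun (p : Fin d × Bool) _ => Nat.cast_sub (hN₁N (x + step p.1 p.2))),
      Nat.cast_sub (hN₁N x), Finset.sum_sub_distrib]
    linarith
  obtain ⟨τ, hτleg, hτexh⟩ := exists_legal_exhaustive (γ := γ) (stabilizeInf d γ ζ₁ + ζ₂)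
  have hboundτ := legal_bound _ _ hM' τ hτleg
  have hτfin : ∀ x, {m | τ m = some x}.Finite :=
    fun x => finite_of_bounded τ x _ (fun n => hboundτ n x)
  have hstab' : Stabilizable d γ (stabilizeInf d γ ζ₁ + ζ₂) := ⟨τ, hτleg, hτexh, hτfin⟩
  obtain ⟨τ'leg, τ'exh, τ'fin⟩ := hstab'.choose_spec
  have hN₂M : ∀ y, Nat.card {m | hstab'.choose m = some y}
      ≤ Nat.card {m | h.choose m = some y} - Nat.card {m | hstab₁.choose m = some y} :=
    fun y => counts_card_le _ _ hM' hstab'.choose τ'leg τ'fin y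
  -- combined counts N₁ + N₂ stabilize ζ₁ + ζ₂
  have Sτ' := stable_final (stabilizeInf d γ ζ₁ + ζ₂) hstab'.choose τ'exh τ'fin
  have SC : ∀ x, (ζ₁ + ζ₂) x
      - (2*d+γ) * (((Nat.card {m | hstab₁.choose m = some x}
          + Nat.card {m | hstab'.choose m = some x} : ℕ)) : ℝ)
      + ∑ p : Fin d × Bool,
          (((Nat.card {m | hstab₁.choose m = some (x + step p.1 p.2)}
            + Nat.card {m | hstab'.choose m = some (x + step p.1 p.2)} : ℕ)) : ℝ)
      < 2*d+γ := by
    intro x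
    have hx := Sτ' x
    rw [Pi.add_apply, hSdef x] at hx
    rw [Pi.add_apply]
    push_cast
    rw [Finset.sum_add_distrib]
    push_cast at hx
    linarith
  have hboundρ := legal_bound (ζ₁ + ζ₂) _ SC h.choose ρleg
  have hNC : ∀ y, Nat.card {m | h.choose m = some y}
      ≤ Nat.card {m | hstab₁.choose m = some y}
        + Nat.card {m | hstab'.choose m = some y} := by
    intro y
    obtain ⟨n₀, hn₀⟩ := exists_mcount_eq h.choose y (ρfin y)
    rw [← hn₀ n₀ le_rfl]
    exact hboundρ n₀ y
  have hEq : ∀ y, Nat.card {m | h.choose m = some y}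
      = Nat.card {m | hstab₁.choose m = some y}
        + Nat.card {m | hstab'.choose m = some y} := by
    intro y
    have := hN₂M y
    have := hN₁N y
    have := hNC y
    omega
  refine ⟨hstab₁, hstab', ?_⟩
  funext x
  show stabilizeInf d γ (ζ₁ + ζ₂) x = stabilizeInf d γ (stabilizeInf d γ ζ₁ + ζ₂) x
  rw [stabilizeInf_eq h x, stabilizeInf_eq hstab' x]
  simp only [Pi.add_apply]
  rw [hSdef x]
  have hcast : ∀ y, ((Nat.card {m | h.choose m = some y} : ℕ) : ℝ)
      = ((Nat.card {m | hstab₁.choose m = some y} : ℕ) : ℝ)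
        + ((Nat.card {m | hstab'.choose m = some y} : ℕ) : ℝ) := by
    intro y; rw [hEq y]; push_cast; ring
  rw [Finset.sum_congr rfl (fun (p : Fin d × Bool) _ => hcast (x + step p.1 p.2)),
    Finset.sum_add_distrib, hcast x]
  ring
end

section
/- Let γ > 0 and suppose η ∈ [0,∞)^{Z^d} satisfies Σ_{y∈Z^d} G^{(γ)}(x,y)·η_y < ∞ for every x ∈ Z^d, where G^{(γ)} = (Δ^{(γ)})^{−1}. Then η is γ-stabilizable, and moreover for every x, sup over finite Λ of N^{(γ)}_Λ(η)_x ≤ Σ_{y} G^{(γ)}(x,y)·η_y. -/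
/-- The Green's function `G^{(γ)}(x,y) = (Δ^{(γ)})⁻¹_{xy}` of the walk on `ℤ^d`
crossing each edge at rate `1` and killed at rate `γ`. -/
noncomputable def green (d : ℕ) (γ : ℝ) (x y : Site d) : ℝ :=
  (1 / (2 * d + γ)) * ∑' n : ℕ, (2 * d / (2 * d + γ)) ^ n * srwP d n x y


section Aux

open Finset

variable {d : ℕ} {γ : ℝ}

lemma dist1_self (x : Site d) : dist1 x x = 0 := by simp [dist1]

lemma step_apply (i : Fin d) (b : Bool) (j : Fin d) :
    step i b j = if j = i then (if b then 1 else -1) else 0 := rfl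

lemma dist1_step (w : Site d) (i : Fin d) (b : Bool) :
    dist1 (w + step i b) w = 1 := by
  unfold dist1
  have : ∀ j, ((w + step i b) j - w j).natAbs = if j = i then 1 else 0 := by
    intro j
    simp only [Pi.add_apply, step_apply]
    by_cases h : j = i <;> cases b <;> simp [h]
  rw [Finset.sum_congr rfl fun j _ => this j]
  simp

lemma dist1_eq_one {z w : Site d} (h : dist1 z w = 1) :
    ∃ s : Fin d × Bool, z = w + step s.1 s.2 := by
  unfold dist1 at h
  have hex : ∃ j : Fin d, (z j - w j).natAbs ≠ 0 := by
    by_contra hc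
    push_neg at hc
    rw [Finset.sum_congr rfl fun j _ => hc j] at h
    simp at h
  obtain ⟨j, hj⟩ := hex
  have hrest : ∀ i, i ≠ j → (z i - w i).natAbs = 0 ∧ (z j - w j).natAbs = 1 := by
    intro i hi
    have h1 : (z j - w j).natAbs + ∑ i ∈ Finset.univ.erase j, (z i - w i).natAbs = 1 := by
      rw [← Finset.add_sum_erase _ _ (Finset.mem_univ j)] at h
      exact h
    have h2 : 1 ≤ (z j - w j).natAbs := Nat.one_le_iff_ne_zero.mpr hj
    have h3 : ∑ i ∈ Finset.univ.erase j, (z i - w i).natAbs = 0 := by omega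
    have h4 : (z i - w i).natAbs = 0 :=
      Finset.sum_eq_zero_iff.mp h3 i (Finset.mem_erase.mpr ⟨hi, Finset.mem_univ i⟩)
    exact ⟨h4, by omega⟩
  have hjv : z j - w j = 1 ∨ z j - w j = -1 := by
    have : (z j - w j).natAbs = 1 := by
      by_cases hd1 : ∃ i : Fin d, i ≠ j
      · obtain ⟨i, hi⟩ := hd1; exact (hrest i hi).2
      · push_neg at hd1
        have : ∀ i, i = j := hd1
        rw [Finset.sum_eq_single j (fun i _ hi => absurd (this i) hi)
          (fun hj' => absurd (Finset.mem_univ j) hj')] at h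
        exact h
    omega
  refine ⟨(j, if z j - w j = 1 then true else false), funext fun i => ?_⟩
  simp only [Pi.add_apply, step_apply]
  by_cases hij : i = j
  · subst hij
    rcases hjv with hv | hv <;> simp [hv] <;> omega
  · have := (hrest i hij).1
    simp [hij]
    omega

lemma step_add_injective (w : Site d) :
    Function.Injective (fun s : Fin d × Bool => w + step s.1 s.2) := by
  rintro ⟨i, b⟩ ⟨i', b'⟩ h
  simp only at h
  have hs : step i b = step i' b' := by
    funext j
    have := congrFun h j
    simpa using this
  have hi : i = i' := by
    by_contra hne
    have h1 := congrFun hs i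
    simp [step_apply, hne] at h1
    cases b <;> simp_all
  subst hi
  have h1 := congrFun hs i
  simp [step_apply] at h1
  cases b <;> cases b' <;> simp_all

lemma srwP_nonneg (n : ℕ) (x y : Site d) : 0 ≤ srwP d n x y := by
  induction n generalizing x with
  | zero => simp only [srwP]; positivity
  | succ n ih =>
    simp only [srwP]
    have : 0 ≤ ∑ s : Fin d × Bool, srwP d n (x + step s.1 s.2) y :=
      Finset.sum_nonneg fun s _ => ih _
    positivity

lemma srwP_le_one (hd : 0 < d) (n : ℕ) (x y : Site d) : srwP d n x y ≤ 1 := by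
  induction n generalizing x with
  | zero => simp only [srwP]; split <;> norm_num
  | succ n ih =>
    simp only [srwP]
    have h1 : ∑ s : Fin d × Bool, srwP d n (x + step s.1 s.2) y ≤ (2 * d : ℝ) := by
      calc ∑ s : Fin d × Bool, srwP d n (x + step s.1 s.2) y
          ≤ ∑ _s : Fin d × Bool, (1 : ℝ) := Finset.sum_le_sum fun s _ => ih _
        _ = (2 * d : ℝ) := by
            simp [Finset.card_univ, Fintype.card_prod]
            ring
    have hd' : (0 : ℝ) < 2 * d := by positivity
    rw [div_mul_eq_mul_div, one_mul, div_le_one hd']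
    exact h1

lemma srwP_translate (n : ℕ) (x y v : Site d) :
    srwP d n (x + v) (y + v) = srwP d n x y := by
  induction n generalizing x with
  | zero =>
    simp only [srwP, add_left_inj]
  | succ n ih =>
    simp only [srwP]
    congr 1
    refine Finset.sum_congr rfl fun s _ => ?_
    rw [show x + v + step s.1 s.2 = (x + step s.1 s.2) + v by abel]
    exact ih _

lemma step_not (i : Fin d) (b : Bool) : step i (!b) = -step i b := by
  funext j
  simp only [step_apply, Pi.neg_apply]
  cases b <;> by_cases h : j = i <;> simp [h]

/-- backward = forward neighbor sum -/
lemma srwP_nbr_sum (n : ℕ) (x w : Site d) :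
    ∑ s : Fin d × Bool, srwP d n x (w + step s.1 s.2)
      = ∑ s : Fin d × Bool, srwP d n (x + step s.1 s.2) w := by
  have key : ∀ s : Fin d × Bool, srwP d n (x + step s.1 s.2) w
      = srwP d n x (w + step s.1 (!s.2)) := by
    intro s
    rw [← srwP_translate n x (w + step s.1 (!s.2)) (step s.1 s.2)]
    congr 1
    rw [step_not]
    abel
  rw [Finset.sum_congr rfl fun s _ => key s]
  exact Fintype.sum_equiv
    ((Equiv.refl (Fin d)).prodCongr ⟨Bool.not, Bool.not, Bool.not_not, Bool.not_not⟩)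
    (fun s => srwP d n x (w + step s.1 s.2))
    (fun s => srwP d n x (w + step s.1 (!s.2)))
    (fun s => by simp)


lemma A_pos (hγ : 0 < γ) : (0:ℝ) < 2 * d + γ := by positivity

lemma r_nonneg (hγ : 0 < γ) : (0:ℝ) ≤ 2 * d / (2 * d + γ) := by positivity

lemma r_lt_one (hγ : 0 < γ) : (2 * d : ℝ) / (2 * d + γ) < 1 := by
  rw [div_lt_one (A_pos hγ)]
  linarith

lemma summable_pow_mul (hγ : 0 < γ) (f : ℕ → ℝ) (h0 : ∀ n, 0 ≤ f n) (h1 : ∀ n, f n ≤ 1) :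
    Summable (fun n => (2 * d / (2 * d + γ)) ^ n * f n) := by
  refine Summable.of_nonneg_of_le (fun n => mul_nonneg (by positivity) (h0 n)) (fun n => ?_)
    (summable_geometric_of_lt_one (r_nonneg (d := d) hγ) (r_lt_one (d := d) hγ))
  calc (2 * d / (2 * d + γ)) ^ n * f n ≤ (2 * d / (2 * d + γ)) ^ n * 1 := by
        refine mul_le_mul_of_nonneg_left (h1 n) (by positivity)
    _ = (2 * d / (2 * d + γ)) ^ n := mul_one _

lemma summable_srw (hd : 0 < d) (hγ : 0 < γ) (x y : Site d) :
    Summable (fun n => (2 * d / (2 * d + γ)) ^ n * srwP d n x y) :=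
  summable_pow_mul hγ _ (fun n => srwP_nonneg n x y) (fun n => srwP_le_one hd n x y)

lemma summable_srw' (hd : 0 < d) (hγ : 0 < γ) (x y : Site d) :
    Summable (fun n => (2 * d / (2 * d + γ)) ^ n * srwP d (n + 1) x y) :=
  summable_pow_mul hγ _ (fun n => srwP_nonneg _ x y) (fun n => srwP_le_one hd _ x y)

lemma green_nonneg (hγ : 0 < γ) (x y : Site d) : 0 ≤ green d γ x y := by
  unfold green
  have h1 : 0 ≤ ∑' n : ℕ, (2 * d / (2 * d + γ)) ^ n * srwP d n x y :=
    tsum_nonneg fun n => mul_nonneg (by positivity) (srwP_nonneg n x y)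
  positivity

lemma srwP_zero (x y : Site d) : srwP d 0 x y = if x = y then 1 else 0 := rfl

lemma srwP_succ (n : ℕ) (x y : Site d) :
    srwP d (n + 1) x y
      = (1 / (2 * d)) * ∑ s : Fin d × Bool, srwP d n (x + step s.1 s.2) y := rfl

lemma green_identity (hd : 0 < d) (hγ : 0 < γ) (x w : Site d) :
    (2 * d + γ) * green d γ x w
      - ∑ s : Fin d × Bool, green d γ x (w + step s.1 s.2)
      = if x = w then 1 else 0 := by
  have hA : (0:ℝ) < 2 * d + γ := A_pos hγ
  have hD : (0:ℝ) < 2 * d := by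
    have : (0:ℝ) < (d:ℝ) := by exact_mod_cast hd
    linarith
  have h1 : (2 * d + γ) * green d γ x w
      = ∑' n : ℕ, (2 * d / (2 * d + γ)) ^ n * srwP d n x w := by
    unfold green
    rw [← mul_assoc, mul_one_div, div_self hA.ne', one_mul]
  have hnbr : ∀ n : ℕ, ∑ s : Fin d × Bool, srwP d n x (w + step s.1 s.2)
      = (2 * d) * srwP d (n + 1) x w := by
    intro n
    rw [srwP_nbr_sum, srwP_succ, ← mul_assoc, mul_one_div, div_self hD.ne', one_mul]
  have hswap := Summable.tsum_finsetSum (s := (Finset.univ : Finset (Fin d × Bool)))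
    (f := fun (s : Fin d × Bool) (n : ℕ) =>
      (2 * d / (2 * d + γ)) ^ n * srwP d n x (w + step s.1 s.2))
    (fun s _ => summable_srw hd hγ x (w + step s.1 s.2))
  have h2 : ∑ s : Fin d × Bool, green d γ x (w + step s.1 s.2)
      = (2 * d / (2 * d + γ)) *
          ∑' n : ℕ, (2 * d / (2 * d + γ)) ^ n * srwP d (n + 1) x w := by
    unfold green
    rw [← Finset.mul_sum, ← hswap]
    have hc : ∀ n : ℕ,
        (∑ s : Fin d × Bool, (2 * d / (2 * d + γ)) ^ n * srwP d n x (w + step s.1 s.2))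
        = (2 * d) * ((2 * d / (2 * d + γ)) ^ n * srwP d (n + 1) x w) := by
      intro n
      rw [← Finset.mul_sum, hnbr n]
      ring
    rw [tsum_congr hc, tsum_mul_left, ← mul_assoc]
    congr 1
    field_simp
  have h3 : ∑' n : ℕ, (2 * d / (2 * d + γ)) ^ n * srwP d n x w
      = (if x = w then 1 else 0)
        + (2 * d / (2 * d + γ)) *
            ∑' n : ℕ, (2 * d / (2 * d + γ)) ^ n * srwP d (n + 1) x w := by
    rw [Summable.tsum_eq_zero_add (summable_srw hd hγ x w)]
    congr 1
    · simp [srwP_zero]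
    · rw [← tsum_mul_left]
      refine tsum_congr fun n => ?_
      ring
  rw [h1, h2, h3]
  ring


lemma toppleMat_symm (x y : Site d) : toppleMat d γ x y = toppleMat d γ y x := by
  unfold toppleMat
  rw [dist1_comm]
  by_cases h : x = y
  · simp [h]
  · simp [h, Ne.symm h]

lemma toppleMat_offdiag_nonpos {x y : Site d} (h : x ≠ y) : toppleMat d γ x y ≤ 0 := by
  unfold toppleMat
  rw [if_neg h]
  split <;> norm_num

lemma green_mul_toppleMat (hd : 0 < d) (hγ : 0 < γ) (x w : Site d) (S : Finset (Site d))
    (hw : w ∈ S) (hnbr : ∀ s : Fin d × Bool, w + step s.1 s.2 ∈ S) :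
    ∑ z ∈ S, green d γ x z * toppleMat d γ z w = if x = w then 1 else 0 := by
  classical
  have hsplit : ∑ z ∈ S, green d γ x z * toppleMat d γ z w
      = green d γ x w * toppleMat d γ w w
        + ∑ z ∈ S.erase w, green d γ x z * toppleMat d γ z w :=
    (Finset.add_sum_erase S _ hw).symm
  have hww : toppleMat d γ w w = 2 * d + γ := if_pos rfl
  set Nb : Finset (Site d) :=
    Finset.image (fun s : Fin d × Bool => w + step s.1 s.2) Finset.univ with hNb
  have hfilter : (S.erase w).filter (fun z => dist1 z w = 1) = Nb := by
    ext z
    simp only [Finset.mem_filter, Finset.mem_erase, hNb, Finset.mem_image,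
      Finset.mem_univ, true_and]
    constructor
    · rintro ⟨⟨-, -⟩, h1⟩
      obtain ⟨s, hs⟩ := dist1_eq_one h1
      exact ⟨s, hs.symm⟩
    · rintro ⟨s, hs⟩
      have h1 : dist1 z w = 1 := by rw [← hs]; exact dist1_step w s.1 s.2
      refine ⟨⟨?_, ?_⟩, h1⟩
      · intro hz
        rw [hz, dist1_self] at h1
        exact one_ne_zero h1.symm
      · rw [← hs]; exact hnbr s
  have herase : ∑ z ∈ S.erase w, green d γ x z * toppleMat d γ z w
      = ∑ z ∈ Nb, -(green d γ x z) := by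
    rw [← hfilter, Finset.sum_filter]
    refine Finset.sum_congr rfl fun z hz => ?_
    have hzw : z ≠ w := (Finset.mem_erase.mp hz).1
    unfold toppleMat
    rw [if_neg hzw]
    by_cases h1 : dist1 z w = 1 <;> simp [h1]
  have himg : ∑ z ∈ Nb, -(green d γ x z)
      = -∑ s : Fin d × Bool, green d γ x (w + step s.1 s.2) := by
    rw [hNb, Finset.sum_image (fun a _ b _ h => step_add_injective w h)]
    rw [← Finset.sum_neg_distrib]
  rw [hsplit, hww, herase, himg, mul_comm]
  have := green_identity hd hγ x w
  linarith [abs_nonneg (0:ℝ)]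

/-- Legality of a toppling list, without any volume constraint. -/
def LegalL (d : ℕ) (γ : ℝ) : Config d → List (Site d) → Prop
  | _, [] => True
  | η, x :: l => 2 * d + γ ≤ η x ∧ LegalL d γ (topple d γ x η) l

lemma legalList_legalL {Λ : Finset (Site d)} {η : Config d} {l : List (Site d)}
    (h : legalList d γ Λ η l) : LegalL d γ η l := by
  induction l generalizing η with
  | nil => trivial
  | cons x l ih => exact ⟨h.2.1, ih h.2.2⟩

lemma applyList_eq (l : List (Site d)) (η : Config d) (y : Site d) :
    applyList d γ l η y = η y - (l.map (fun x => toppleMat d γ x y)).sum := by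
  induction l generalizing η with
  | nil => simp [applyList]
  | cons x l ih =>
    simp only [applyList, List.map_cons, List.sum_cons, ih (topple d γ x η), topple]
    ring

lemma topple_nonneg (hγ : 0 < γ) {η : Config d} {x : Site d} (hη : ∀ y, 0 ≤ η y)
    (hx : 2 * d + γ ≤ η x) : ∀ y, 0 ≤ topple d γ x η y := by
  intro y
  unfold topple
  by_cases h : x = y
  · subst h
    have : toppleMat d γ x x = 2 * d + γ := if_pos rfl
    rw [this]
    linarith
  · have := toppleMat_offdiag_nonpos (γ := γ) h
    have := hη y
    linarith

lemma applyList_nonneg (hγ : 0 < γ) {η : Config d} {l : List (Site d)}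
    (hη : ∀ y, 0 ≤ η y) (hl : LegalL d γ η l) : ∀ y, 0 ≤ applyList d γ l η y := by
  induction l generalizing η with
  | nil => exact hη
  | cons x l ih => exact ih (topple_nonneg hγ hη hl.1) hl.2

/-- Main bound: in any legal toppling list, each site topples at most
`Σ_y G(x,y) η_y` times. -/
lemma count_le_green (hd : 0 < d) (hγ : 0 < γ) {η : Config d} (hη : ∀ z, 0 ≤ η z)
    {l : List (Site d)} (hl : LegalL d γ η l) (x : Site d)
    (hs : Summable fun y : Site d => green d γ x y * η y) :
    (l.count x : ℝ) ≤ ∑' y : Site d, green d γ x y * η y := by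
  classical
  set T' : Finset (Site d) := insert x l.toFinset with hT'
  set S : Finset (Site d) := T' ∪ T'.biUnion
      (fun w => Finset.image (fun s : Fin d × Bool => w + step s.1 s.2) Finset.univ)
    with hS
  have hT'S : T' ⊆ S := Finset.subset_union_left
  have hnbrS : ∀ w ∈ T', ∀ s : Fin d × Bool, w + step s.1 s.2 ∈ S := by
    intro w hw s
    refine Finset.mem_union_right _ (Finset.mem_biUnion.mpr ⟨w, hw, ?_⟩)
    exact Finset.mem_image.mpr ⟨s, Finset.mem_univ s, rfl⟩
  have hkey : ∀ y : Site d,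
      ∑ w ∈ T', (l.count w : ℝ) * toppleMat d γ w y = η y - applyList d γ l η y := by
    intro y
    rw [applyList_eq]
    rw [Finset.sum_insert_of_eq_zero_if_notMem (by
      intro hx'
      have : l.count x = 0 :=
        List.count_eq_zero.mpr fun hc => hx' (List.mem_toFinset.mpr hc)
      rw [this]
      simp)]
    rw [Finset.sum_list_map_count l (fun x => toppleMat d γ x y)]
    rw [Finset.sum_congr rfl (fun w _ => (nsmul_eq_mul _ _ : l.count w • toppleMat d γ w y = _))]
    ring
  have hξ : ∀ y, 0 ≤ applyList d γ l η y := applyList_nonneg hγ hη hl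
  have step1 : (l.count x : ℝ)
      = ∑ w ∈ T', (l.count w : ℝ) * (if x = w then 1 else 0) := by
    rw [Finset.sum_congr rfl (fun w _ => by rw [mul_ite, mul_one, mul_zero])]
    rw [Finset.sum_ite_eq T' x (fun w => (l.count w : ℝ))]
    rw [if_pos (Finset.mem_insert_self x _)]
  have step2 : (l.count x : ℝ)
      = ∑ z ∈ S, green d γ x z * (η z - applyList d γ l η z) := by
    rw [step1]
    have : ∀ w ∈ T', (l.count w : ℝ) * (if x = w then 1 else 0)
        = ∑ z ∈ S, (l.count w : ℝ) * (green d γ x z * toppleMat d γ z w) := by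
      intro w hw
      rw [← Finset.mul_sum, green_mul_toppleMat hd hγ x w S (hT'S hw) (hnbrS w hw)]
    rw [Finset.sum_congr rfl this, Finset.sum_comm]
    refine Finset.sum_congr rfl fun z _ => ?_
    rw [← hkey z, Finset.mul_sum]
    refine Finset.sum_congr rfl fun w _ => ?_
    rw [toppleMat_symm]
    ring
  rw [step2]
  calc ∑ z ∈ S, green d γ x z * (η z - applyList d γ l η z)
      ≤ ∑ z ∈ S, green d γ x z * η z := by
        refine Finset.sum_le_sum fun z _ => ?_
        have h1 := green_nonneg hγ x z
        have h2 := hξ z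
        nlinarith
    _ ≤ ∑' y : Site d, green d γ x y * η y :=
        Summable.sum_le_tsum S (fun z _ => mul_nonneg (green_nonneg hγ x z) (hη z)) hs


/-- concatenation of topplings -/
lemma applyList_append (l l' : List (Site d)) (η : Config d) :
    applyList d γ (l ++ l') η = applyList d γ l' (applyList d γ l η) := by
  induction l generalizing η with
  | nil => rfl
  | cons x l ih =>
    simp only [List.cons_append, applyList]
    exact ih _

lemma LegalL_append_singleton {η : Config d} {l : List (Site d)} {x : Site d}
    (hl : LegalL d γ η l) (hx : 2 * d + γ ≤ applyList d γ l η x) :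
    LegalL d γ η (l ++ [x]) := by
  induction l generalizing η with
  | nil => exact ⟨hx, trivial⟩
  | cons z l ih => exact ⟨hl.1, ih hl.2 hx⟩

end Aux

section Greedy

open scoped Classical

variable {d : ℕ} {γ : ℝ}

/-- The greedy configuration sequence along an enumeration `e`. -/
noncomputable def greedy (d : ℕ) (γ : ℝ) (η : Config d) (e : ℕ → Site d) : ℕ → Config d
  | 0 => η
  | n + 1 =>
      if 2 * d + γ ≤ greedy d γ η e n (e n) then
        topple d γ (e n) (greedy d γ η e n)
      else greedy d γ η e n

/-- The greedy toppling sequence. -/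
noncomputable def greedyS (d : ℕ) (γ : ℝ) (η : Config d) (e : ℕ → Site d)
    (n : ℕ) : Option (Site d) :=
  if 2 * d + γ ≤ greedy d γ η e n (e n) then some (e n) else none

lemma cfgSeq_greedy (η : Config d) (e : ℕ → Site d) (n : ℕ) :
    cfgSeq d γ η (greedyS d γ η e) n = greedy d γ η e n := by
  induction n with
  | zero => rfl
  | succ n ih =>
    show toppleO d γ (greedyS d γ η e n) (cfgSeq d γ η (greedyS d γ η e) n) = _
    rw [ih]
    by_cases h : 2 * d + γ ≤ greedy d γ η e n (e n)
    · simp only [greedyS, if_pos h, toppleO, greedy, if_pos h]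
    · simp only [greedyS, if_neg h, toppleO, greedy, if_neg h]

lemma greedyS_some {η : Config d} {e : ℕ → Site d} {n : ℕ} {x : Site d}
    (h : greedyS d γ η e n = some x) :
    x = e n ∧ 2 * d + γ ≤ greedy d γ η e n (e n) := by
  unfold greedyS at h
  split at h
  · exact ⟨(Option.some_injective _ h).symm, by assumption⟩
  · exact absurd h (by simp)

lemma greedy_legal (η : Config d) (e : ℕ → Site d) :
    legalSeq d γ η (greedyS d γ η e) := by
  intro n x h
  obtain ⟨hx, hb⟩ := greedyS_some h
  rw [cfgSeq_greedy, hx]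
  exact hb

/-- The list of sites toppled during the first `n` steps. -/
noncomputable def prefList (d : ℕ) (s : ℕ → Option (Site d)) : ℕ → List (Site d)
  | 0 => []
  | n + 1 => prefList d s n ++ (s n).toList

lemma applyList_toppleO (o : Option (Site d)) (ξ : Config d) :
    applyList d γ o.toList ξ = toppleO d γ o ξ := by
  cases o <;> rfl

lemma applyList_prefList (η : Config d) (s : ℕ → Option (Site d)) (n : ℕ) :
    applyList d γ (prefList d s n) η = cfgSeq d γ η s n := by
  induction n with
  | zero => rfl
  | succ n ih =>
    show applyList d γ (prefList d s n ++ (s n).toList) η = _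
    rw [applyList_append, ih, applyList_toppleO]
    rfl

lemma LegalL_prefList {η : Config d} {s : ℕ → Option (Site d)}
    (hs : legalSeq d γ η s) (n : ℕ) : LegalL d γ η (prefList d s n) := by
  induction n with
  | zero => trivial
  | succ n ih =>
    show LegalL d γ η (prefList d s n ++ (s n).toList)
    cases h : s n with
    | none => simpa using ih
    | some x =>
      refine LegalL_append_singleton ih ?_
      rw [applyList_prefList]
      exact hs n x h

lemma count_prefList (s : ℕ → Option (Site d)) (x : Site d) (n : ℕ) :
    (prefList d s n).count x
      = ((Finset.range n).filter (fun m => s m = some x)).card := by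
  induction n with
  | zero => rfl
  | succ n ih =>
    show (prefList d s n ++ (s n).toList).count x = _
    rw [List.count_append, ih, Finset.range_add_one, Finset.filter_insert]
    by_cases h : s n = some x
    · rw [if_pos h, Finset.card_insert_of_notMem (fun hc =>
        Finset.notMem_range_self (Finset.mem_filter.mp hc).1)]
      have : (s n).toList = [x] := by rw [h]; rfl
      rw [this]
      simp
    · rw [if_neg h]
      have : (s n).toList.count x = 0 := by
        cases hc : s n with
        | none => rfl
        | some y =>
          have : y ≠ x := fun he => h (by rw [hc, he])
          simp [Option.toList, List.count_singleton, this]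
      omega


lemma greedy_succ (η : Config d) (e : ℕ → Site d) (k : ℕ) :
    greedy d γ η e (k + 1)
      = if 2 * d + γ ≤ greedy d γ η e k (e k) then
          topple d γ (e k) (greedy d γ η e k)
        else greedy d γ η e k := by
  simp only [greedy]

lemma greedy_one_step_mono {η : Config d} {e : ℕ → Site d} {x : Site d} {k : ℕ}
    (hne : e k ≠ x) : greedy d γ η e k x ≤ greedy d γ η e (k + 1) x := by
  rw [greedy_succ]
  split
  · have h1 : toppleMat d γ (e k) x ≤ 0 := toppleMat_offdiag_nonpos hne
    show _ ≤ greedy d γ η e k x - toppleMat d γ (e k) x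
    linarith
  · exact le_refl _

lemma greedy_mono {η : Config d} {e : ℕ → Site d} {x : Site d} {n : ℕ} :
    ∀ k, n ≤ k → (∀ j, n ≤ j → j < k → e j ≠ x) →
      greedy d γ η e n x ≤ greedy d γ η e k x := by
  intro k
  induction k with
  | zero => intro h _; rw [Nat.le_zero.mp h]
  | succ k ih =>
    intro hnk hj
    by_cases h : n = k + 1
    · rw [h]
    · have hnk' : n ≤ k := by omega
      exact le_trans (ih hnk' fun j h1 h2 => hj j h1 (by omega))
        (greedy_one_step_mono (hj k hnk' (by omega)))

lemma greedy_exhaustive (η : Config d) (e : ℕ → Site d)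
    (hvisit : ∀ (x : Site d) (n0 : ℕ), ∃ n, n0 ≤ n ∧ e n = x) :
    exhaustiveSeq d γ η (greedyS d γ η e) := by
  intro n x h
  rw [cfgSeq_greedy] at h
  obtain ⟨n', hn', hen'⟩ := hvisit x n
  have hP : ∃ m, e (n + m) = x := ⟨n' - n, by rwa [Nat.add_sub_cancel' hn']⟩
  set k := Nat.find hP with hk
  refine ⟨n + k, Nat.le_add_right _ _, ?_⟩
  have hek : e (n + k) = x := Nat.find_spec hP
  have hmono : greedy d γ η e n x ≤ greedy d γ η e (n + k) x := by
    refine greedy_mono (n + k) (Nat.le_add_right _ _) fun j h1 h2 hje => ?_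
    have hfind := Nat.find_min hP (m := j - n) (by omega)
    rw [Nat.add_sub_cancel' h1] at hfind
    exact hfind hje
  have hcond : 2 * d + γ ≤ greedy d γ η e (n + k) (e (n + k)) := by
    rw [hek]; linarith
  unfold greedyS
  rw [if_pos hcond, hek]

lemma finite_topplings (hd : 0 < d) (hγ : 0 < γ) {η : Config d}
    {s : ℕ → Option (Site d)} (hη : ∀ z, 0 ≤ η z) (hs : legalSeq d γ η s)
    (x : Site d) (hsum : Summable fun y : Site d => green d γ x y * η y) :
    {m : ℕ | s m = some x}.Finite := by
  by_contra hfin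
  have hinf : {m : ℕ | s m = some x}.Infinite := hfin
  set B : ℝ := ∑' y : Site d, green d γ x y * η y with hB
  have hB0 : 0 ≤ B :=
    tsum_nonneg fun y => mul_nonneg (green_nonneg hγ x y) (hη y)
  set K : ℕ := Nat.floor B with hK
  obtain ⟨t, hts, htc⟩ := hinf.exists_subset_card_eq (K + 1)
  set n : ℕ := t.sup id + 1 with hn
  have hsub : t ⊆ (Finset.range n).filter (fun m => s m = some x) := by
    intro m hm
    refine Finset.mem_filter.mpr ⟨Finset.mem_range.mpr ?_, hts hm⟩
    have : m ≤ t.sup id := Finset.le_sup (f := id) hm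
    omega
  have hcard : K + 1 ≤ ((Finset.range n).filter (fun m => s m = some x)).card :=
    htc ▸ Finset.card_le_card hsub
  have hcount : ((prefList d s n).count x : ℝ) ≤ B :=
    count_le_green hd hγ hη (LegalL_prefList hs n) x hsum
  rw [count_prefList] at hcount
  have h1 : ((K : ℝ) + 1) ≤ B := by
    calc ((K : ℝ) + 1) = ((K + 1 : ℕ) : ℝ) := by push_cast; ring
      _ ≤ (((Finset.range n).filter (fun m => s m = some x)).card : ℝ) := by
          exact_mod_cast hcard
      _ ≤ B := hcount
  have h2 : B < K + 1 := Nat.lt_floor_add_one B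
  linarith

end Greedy


/-- If `γ > 0` and `Σ_y G^{(γ)}(x,y) η_y < ∞` for every `x`, then `η` is
`γ`-stabilizable, and the finite-volume toppling numbers at `x` are bounded
by `Σ_y G^{(γ)}(x,y) η_y`. -/
theorem stabilizable_of_green_summable (d : ℕ) (hd : 0 < d) (γ : ℝ) (hγ : 0 < γ)
    (η : Config d) (hη : ∀ z, 0 ≤ η z)
    (hsum : ∀ x : Site d, Summable fun y : Site d => green d γ x y * η y) :
    Stabilizable d γ η ∧
      ∀ (x : Site d) (Λ : Finset (Site d)) (l : List (Site d)),
        stabilizingList d γ Λ η l →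
          (l.count x : ℝ) ≤ ∑' y : Site d, green d γ x y * η y := by
  have hne : Nonempty (Site d) := ⟨fun _ => 0⟩
  obtain ⟨g, hg⟩ := exists_surjective_nat (Site d)
  set e : ℕ → Site d := fun n => g (Nat.unpair n).1 with he
  have hvisit : ∀ (x : Site d) (n0 : ℕ), ∃ n, n0 ≤ n ∧ e n = x := by
    intro x n0
    obtain ⟨k, hk⟩ := hg x
    exact ⟨Nat.pair k n0, Nat.right_le_pair k n0,
      by simp [he, Nat.unpair_pair, hk]⟩
  constructor
  · exact ⟨greedyS d γ η e, greedy_legal η e, greedy_exhaustive η e hvisit,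
      fun x => finite_topplings hd hγ hη (greedy_legal η e) x (hsum x)⟩
  · intro x Λ l hl
    exact count_le_green hd hγ hη (legalList_legalL hl.1) x (hsum x)
end
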